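/- Let v_0, h¹_i, h³_i be real numbers with h¹_i ≥ 0 and h²_i ∈ [0,1), and let v_N be defined recursively by v_i = (1 - h²_i)v_{i-1} + h¹_i + h³_i. Then there exists a constant C (independent of the data) such that |v_N - v_0|² ≤ C·( |v_0|²·(∑_{i=1}^N h²_i)² + (∑_{i=1}^N h¹_i)² + max_{1 ≤ k ≤ N}(∑_{i=1}^k h³_i)² ). -/

import Mathlib

/-- key deterministic estimate. There is a universal constant `C > 0`
such that for any recursion `v_i = (1 - h²_i) v_{i-1} + h¹_i + h³_i` with
`h²_i ∈ [0,1)` and `h¹_i ≥ 0`,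
`|v_N - v_0|² ≤ C (|v_0|² (∑ h²_i)² + (∑ h¹_i)² + max_{1 ≤ k ≤ N} (∑_{i=1}^k h³_i)²)`. -/
theorem volume_increment_bound :
    ∃ C : ℝ, 0 < C ∧ ∀ (N : ℕ) (v h1 h2 h3 : ℕ → ℝ),
      (∀ i ∈ Finset.Icc 1 N, h2 i ∈ Set.Ico (0 : ℝ) 1) →
      (∀ i ∈ Finset.Icc 1 N, 0 ≤ h1 i) →
      (∀ i ∈ Finset.Icc 1 N, v i = (1 - h2 i) * v (i - 1) + h1 i + h3 i) →
      |v N - v 0| ^ 2 ≤ C *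
        (|v 0| ^ 2 * (∑ i ∈ Finset.Icc 1 N, h2 i) ^ 2 +
          (∑ i ∈ Finset.Icc 1 N, h1 i) ^ 2 +
          ⨆ k ∈ Finset.Icc 1 N, (∑ i ∈ Finset.Icc 1 k, h3 i) ^ 2) := by
  refine ⟨12, by norm_num, ?_⟩
  intro N v h1 h2 h3 hh2 hh1 hrec
  set H : ℕ → ℝ := fun k => ∑ i ∈ Finset.Icc 1 k, h3 i with hHdef
  set g : ℕ → ℝ := fun k => ⨆ _ : k ∈ Finset.Icc 1 N, (∑ i ∈ Finset.Icc 1 k, h3 i) ^ 2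
    with hgdef
  have hTg : (⨆ k ∈ Finset.Icc 1 N, (∑ i ∈ Finset.Icc 1 k, h3 i) ^ 2) = ⨆ k, g k := rfl
  set T : ℝ := ⨆ k, g k with hTdef
  set B : ℝ := (∑ i ∈ Finset.Icc 1 N, |h3 i|) ^ 2 with hBdef
  have hgB : ∀ k, g k ≤ B := by
    intro k
    by_cases hk : k ∈ Finset.Icc 1 N
    · haveI : Nonempty (k ∈ Finset.Icc 1 N) := ⟨hk⟩
      rw [show g k = (∑ i ∈ Finset.Icc 1 k, h3 i) ^ 2 from ciSup_const]
      have h1' : |∑ i ∈ Finset.Icc 1 k, h3 i| ≤ ∑ i ∈ Finset.Icc 1 N, |h3 i| :=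
        (Finset.abs_sum_le_sum_abs _ _).trans
          (Finset.sum_le_sum_of_subset_of_nonneg
            (Finset.Icc_subset_Icc_right (Finset.mem_Icc.mp hk).2)
            (fun i _ _ => abs_nonneg _))
      calc (∑ i ∈ Finset.Icc 1 k, h3 i) ^ 2 = |∑ i ∈ Finset.Icc 1 k, h3 i| ^ 2 :=
            (sq_abs _).symm
        _ ≤ B := pow_le_pow_left₀ (abs_nonneg _) h1' 2
    · haveI : IsEmpty (k ∈ Finset.Icc 1 N) := ⟨fun h => hk h⟩
      rw [show g k = 0 from (iSup_of_empty' _).trans Real.sSup_empty]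
      positivity
  have hbdd : BddAbove (Set.range g) := ⟨B, by rintro x ⟨k, rfl⟩; exact hgB k⟩
  have hT : ∀ k ∈ Finset.Icc 1 N, (∑ i ∈ Finset.Icc 1 k, h3 i) ^ 2 ≤ T := by
    intro k hk
    haveI : Nonempty (k ∈ Finset.Icc 1 N) := ⟨hk⟩
    calc (∑ i ∈ Finset.Icc 1 k, h3 i) ^ 2 = g k := ciSup_const.symm
      _ ≤ T := le_ciSup hbdd k
  have hT0 : 0 ≤ T := by
    have h := le_ciSup hbdd (N + 1)
    haveI : IsEmpty ((N + 1) ∈ Finset.Icc 1 N) := ⟨by simp⟩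
    rwa [show g (N + 1) = 0 from (iSup_of_empty' _).trans Real.sSup_empty] at h
  set M : ℝ := Real.sqrt T with hMdef
  have hM0 : 0 ≤ M := Real.sqrt_nonneg _
  have hM2 : M ^ 2 = T := Real.sq_sqrt hT0
  have hHle : ∀ k, k ≤ N → |H k| ≤ M := by
    intro k hk
    rcases Nat.eq_zero_or_pos k with rfl | h1k
    · have : H 0 = 0 := by simp [hHdef]
      rw [this, abs_zero]; exact hM0
    · have hmem : k ∈ Finset.Icc 1 N := Finset.mem_Icc.mpr ⟨h1k, hk⟩
      have h2' := hT k hmem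
      calc |H k| = Real.sqrt ((H k) ^ 2) := (Real.sqrt_sq_eq_abs _).symm
        _ ≤ Real.sqrt T := Real.sqrt_le_sqrt h2'
  -- bounds on the product
  have hPmem : ∀ k, k ≤ N → ∀ i ∈ Finset.Icc 1 k, 0 ≤ 1 - h2 i ∧ 1 - h2 i ≤ 1 := by
    intro k hk i hi
    have hi' : i ∈ Finset.Icc 1 N := Finset.Icc_subset_Icc_right hk hi
    have := hh2 i hi'
    constructor <;> [linarith [this.2]; linarith [this.1]]
  have key : ∀ k, k ≤ N → |v k - v 0 - H k| ≤
      (∑ i ∈ Finset.Icc 1 k, h1 i) + |v 0| * (∑ i ∈ Finset.Icc 1 k, h2 i) +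
        M * (1 - ∏ i ∈ Finset.Icc 1 k, (1 - h2 i)) := by
    intro k
    induction k with
    | zero =>
      intro _
      simp [hHdef]
    | succ k ih =>
      intro hk
      have hk' : k ≤ N := Nat.le_of_succ_le hk
      have IH := ih hk'
      have hmem : k + 1 ∈ Finset.Icc 1 N := Finset.mem_Icc.mpr ⟨Nat.succ_le_succ (Nat.zero_le _), hk⟩
      have hS1 : (∑ i ∈ Finset.Icc 1 (k + 1), h1 i) = (∑ i ∈ Finset.Icc 1 k, h1 i) + h1 (k + 1) :=
        Finset.sum_Icc_succ_top (Nat.succ_le_succ (Nat.zero_le _)) _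
      have hS2 : (∑ i ∈ Finset.Icc 1 (k + 1), h2 i) = (∑ i ∈ Finset.Icc 1 k, h2 i) + h2 (k + 1) :=
        Finset.sum_Icc_succ_top (Nat.succ_le_succ (Nat.zero_le _)) _
      have hS3 : H (k + 1) = H k + h3 (k + 1) :=
        Finset.sum_Icc_succ_top (Nat.succ_le_succ (Nat.zero_le _)) _
      have hPr : (∏ i ∈ Finset.Icc 1 (k + 1), (1 - h2 i)) =
          (∏ i ∈ Finset.Icc 1 k, (1 - h2 i)) * (1 - h2 (k + 1)) :=
        Finset.prod_Icc_succ_top (Nat.succ_le_succ (Nat.zero_le _)) _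
      have hP0 : 0 ≤ ∏ i ∈ Finset.Icc 1 k, (1 - h2 i) :=
        Finset.prod_nonneg fun i hi => (hPmem k hk' i hi).1
      have hP1 : (∏ i ∈ Finset.Icc 1 k, (1 - h2 i)) ≤ 1 :=
        Finset.prod_le_one (fun i hi => (hPmem k hk' i hi).1) (fun i hi => (hPmem k hk' i hi).2)
      have ha0 : 0 ≤ h2 (k + 1) := (hh2 _ hmem).1
      have ha1 : h2 (k + 1) < 1 := (hh2 _ hmem).2
      have hb0 : 0 ≤ h1 (k + 1) := hh1 _ hmem
      have hHk : |H k| ≤ M := hHle k hk'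
      have hS1n : 0 ≤ ∑ i ∈ Finset.Icc 1 k, h1 i :=
        Finset.sum_nonneg fun i hi => hh1 i (Finset.Icc_subset_Icc_right hk' hi)
      have hS2n : 0 ≤ ∑ i ∈ Finset.Icc 1 k, h2 i :=
        Finset.sum_nonneg fun i hi => (hh2 i (Finset.Icc_subset_Icc_right hk' hi)).1
      have hw : v (k + 1) - v 0 - H (k + 1) =
          (1 - h2 (k + 1)) * (v k - v 0 - H k) + h1 (k + 1) - h2 (k + 1) * (v 0 + H k) := by
        have hr := hrec (k + 1) hmem
        simp only [Nat.add_sub_cancel] at hr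
        rw [hr, hS3]; ring
      have habs : |v (k + 1) - v 0 - H (k + 1)| ≤
          (1 - h2 (k + 1)) * |v k - v 0 - H k| + h1 (k + 1) +
            h2 (k + 1) * (|v 0| + M) := by
        rw [hw]
        have t1 : |(1 - h2 (k + 1)) * (v k - v 0 - H k) + h1 (k + 1) - h2 (k + 1) * (v 0 + H k)|
            ≤ |(1 - h2 (k + 1)) * (v k - v 0 - H k)| + |h1 (k + 1)| + |h2 (k + 1) * (v 0 + H k)| := by
          calc _ ≤ |(1 - h2 (k + 1)) * (v k - v 0 - H k) + h1 (k + 1)| +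
                |h2 (k + 1) * (v 0 + H k)| := abs_sub _ _
            _ ≤ _ := by gcongr; exact abs_add_le _ _
        have t2 : |(1 - h2 (k + 1)) * (v k - v 0 - H k)| =
            (1 - h2 (k + 1)) * |v k - v 0 - H k| := by
          rw [abs_mul, abs_of_nonneg (by linarith)]
        have t3 : |h2 (k + 1) * (v 0 + H k)| ≤ h2 (k + 1) * (|v 0| + M) := by
          rw [abs_mul, abs_of_nonneg ha0]
          have : |v 0 + H k| ≤ |v 0| + M := (abs_add_le _ _).trans (by linarith)
          exact mul_le_mul_of_nonneg_left this ha0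
        rw [abs_of_nonneg hb0] at t1
        linarith
      rw [hS1, hS2, hPr]
      have hwk : 0 ≤ |v k - v 0 - H k| := abs_nonneg _
      nlinarith [mul_le_mul_of_nonneg_left IH (by linarith : (0:ℝ) ≤ 1 - h2 (k + 1)),
        mul_nonneg hM0 hP0, abs_nonneg (v 0), mul_nonneg ha0 hS1n,
        mul_nonneg ha0 (mul_nonneg (abs_nonneg (v 0)) hS2n),
        mul_nonneg (mul_nonneg hM0 ha0) hP0]
  have hkeyN := key N le_rfl
  have hHN : |H N| ≤ M := hHle N le_rfl
  have hPN0 : 0 ≤ ∏ i ∈ Finset.Icc 1 N, (1 - h2 i) :=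
    Finset.prod_nonneg fun i hi => (hPmem N le_rfl i hi).1
  have hfin : |v N - v 0| ≤ (∑ i ∈ Finset.Icc 1 N, h1 i) +
      |v 0| * (∑ i ∈ Finset.Icc 1 N, h2 i) + 2 * M := by
    have : |v N - v 0| ≤ |v N - v 0 - H N| + |H N| := by
      have := abs_add_le (v N - v 0 - H N) (H N); simpa using this
    nlinarith [mul_nonneg hM0 hPN0]
  rw [hTg]
  have hS1n : 0 ≤ ∑ i ∈ Finset.Icc 1 N, h1 i :=
    Finset.sum_nonneg fun i hi => hh1 i hi
  have hS2n : 0 ≤ ∑ i ∈ Finset.Icc 1 N, h2 i :=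
    Finset.sum_nonneg fun i hi => (hh2 i hi).1
  have h0 : 0 ≤ |v N - v 0| := abs_nonneg _
  nlinarith [sq_nonneg ((∑ i ∈ Finset.Icc 1 N, h1 i) - |v 0| * (∑ i ∈ Finset.Icc 1 N, h2 i)),
    sq_nonneg ((∑ i ∈ Finset.Icc 1 N, h1 i) - 2 * M),
    sq_nonneg (|v 0| * (∑ i ∈ Finset.Icc 1 N, h2 i) - 2 * M),
    mul_nonneg (abs_nonneg (v 0)) hS2n, hM0, hM2, hfin, h0,
    mul_self_nonneg (|v N - v 0|)]
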